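/- For a bounded open set U ⊂ ℝ² of area 1, the average over translates (a,b) ∈ [0,1]² of the total length of the intersection of U with the translated integer grid lines {x ∈ a + ℤ} ∪ {y ∈ b + ℤ} equals 2. Consequently there exists a translate of the unit grid whose 1-skeleton meets U in total length at most 2. -/

import Mathlib

open MeasureTheory ENNReal Set

/-!
Cutting the line into the unit intervals `(n, n + 1]` and translating each back to `(0, 1]` shows
that integrating the periodization `∑ₙ f (a + n)` over one period gives `∫ f`. Applied to the
slice lengths `x ↦ |U ∩ {x} × ℝ|`, whose integral is `|U|` by Fubini, this is the claim; finiteness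
of `|U|` makes the periodized slice lengths a.e. finite, so one may pass to real-valued integrals.
-/

theorem lintegral_Icc_tsum_add_intCast {f : ℝ → ℝ≥0∞} (hf : Measurable f) :
    ∫⁻ a in Icc (0 : ℝ) 1, ∑' n : ℤ, f (a + n) = ∫⁻ x, f x := by
  have htranslate (n : ℤ) :
      ∫⁻ a in Ioc (0 : ℝ) 1, f (a + n) = ∫⁻ x in Ioc (n : ℝ) (n + 1), f x := by
    have hpre : (· + (n : ℝ)) ⁻¹' Ioc (n : ℝ) (n + 1) = Ioc 0 1 := by
      rw [preimage_add_const_Ioc]; norm_num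
    rw [← hpre]
    exact (measurePreserving_add_right volume (n : ℝ)).setLIntegral_comp_preimage_emb
      (measurableEmbedding_addRight _) f _
  rw [setLIntegral_congr Ioc_ae_eq_Icc.symm,
    lintegral_tsum (f := fun (n : ℤ) a => f (a + n))
      fun n => (hf.comp (measurable_add_const _)).aemeasurable]
  simp_rw [htranslate]
  rw [← lintegral_iUnion (fun _ => measurableSet_Ioc) (pairwise_disjoint_Ioc_intCast ℝ),
    iUnion_Ioc_intCast ℝ, setLIntegral_univ]

theorem integral_tsum_toReal_of_lintegral_ne_top {α ι : Type*} [MeasurableSpace α] [Countable ι]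
    {μ : Measure α} {f : ι → α → ℝ≥0∞} (hf : ∀ n, AEMeasurable (f n) μ)
    (hfin : ∫⁻ a, ∑' n, f n a ∂μ ≠ ∞) :
    ∫ a, ∑' n, (f n a).toReal ∂μ = (∫⁻ a, ∑' n, f n a ∂μ).toReal := by
  have hsum : AEMeasurable (fun a => ∑' n, f n a) μ := AEMeasurable.tsum hf
  have hsum_lt_top : ∀ᵐ a ∂μ, ∑' n, f n a < ∞ := ae_lt_top' hsum hfin
  rw [← integral_toReal hsum hsum_lt_top]
  refine integral_congr_ae ?_
  filter_upwards [hsum_lt_top] with a ha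
  exact (ENNReal.tsum_toReal_eq fun n => ne_top_of_le_ne_top ha.ne (ENNReal.le_tsum n)).symm

/-- Averaging step in Guth's sweepout of open subsets of the plane: for a
measurable set `U ⊆ ℝ²` of finite area, the average over horizontal translates
`a ∈ [0,1]` of the total length of the intersection of `U` with the vertical
lines `{x = a + n}`, `n ∈ ℤ`, equals the area of `U`. -/
theorem grid_averaging (U : Set (ℝ × ℝ)) (hU : MeasurableSet U)
    (hfin : volume U < ⊤) :
    ∫ a in Set.Icc (0 : ℝ) 1,
        (∑' n : ℤ, (volume {y : ℝ | (a + (n : ℝ), y) ∈ U}).toReal)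
      = (volume U).toReal := by
  have hslice : Measurable fun x => volume {y : ℝ | (x, y) ∈ U} :=
    measurable_measure_prodMk_left hU
  have hperiodize :
      ∫⁻ a in Icc (0 : ℝ) 1, ∑' n : ℤ, volume {y : ℝ | (a + (n : ℝ), y) ∈ U} = volume U := by
    rw [lintegral_Icc_tsum_add_intCast hslice, Measure.volume_eq_prod, Measure.prod_apply hU]
    rfl
  rw [integral_tsum_toReal_of_lintegral_ne_top
      (f := fun (n : ℤ) a => volume {y : ℝ | (a + (n : ℝ), y) ∈ U})
      (fun n => (hslice.comp (measurable_add_const _)).aemeasurable) (hperiodize ▸ hfin.ne),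
    hperiodize]
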